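/- arXiv:2602.11542 — 2 statements merged into one kernel-verified Lean document; each statement's English description precedes it below -/
import Mathlib

section
/- Let β, λ > 0 and f(S, θ, P) = P - S(1 + β(θ - λS)²). The system f = 0, ∂f/∂S = 0, ∂²f/∂S² = 0 has the unique solution S = 2/(λ√(3β)), θ = √(3/β), P = 8/(3λ√(3β)) among (S, θ, P) ∈ ℝ × (0,∞) × ℝ with θ > 0. -/
/-!
Since `f` is a cubic in `S` with leading coefficient `-βλ²`, `∂²f/∂S² = 2βλ(2θ - 3λS)` vanishes
exactly at `θ = 3λS/2`. Writing `u = θ - λS`, this reads `λS = 2u`, `θ = 3u`, and then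
`∂f/∂S = 3βu² - 1`, so `u = 1/√(3β)` on the branch `θ > 0`; finally `f = 0` determines `P`.
-/

open Real

lemma Real.sqrt_div_eq_div_sqrt_mul {a b : ℝ} (ha : 0 ≤ a) (hb : 0 ≤ b) :
    √(a / b) = a / √(a * b) := by
  rw [sqrt_mul ha, ← div_div, div_sqrt, sqrt_div' _ hb]

section Derivatives

variable (P β lam θ S : ℝ)

lemma hasDerivAt_potential :
    HasDerivAt (fun S : ℝ => P - S * (1 + β * (θ - lam * S) ^ 2))
      (-(1 + β * (θ - lam * S) ^ 2) + 2 * β * lam * S * (θ - lam * S)) S := by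
  have h := ((((hasDerivAt_id' S).const_mul lam).const_sub θ).fun_pow 2).const_mul β
  exact (((hasDerivAt_id' S).mul (h.const_add 1)).const_sub P).congr_deriv (by norm_num; ring)

lemma deriv_potential :
    deriv (fun S : ℝ => P - S * (1 + β * (θ - lam * S) ^ 2)) =
      fun S => -(1 + β * (θ - lam * S) ^ 2) + 2 * β * lam * S * (θ - lam * S) :=
  funext fun S => (hasDerivAt_potential P β lam θ S).deriv

lemma hasDerivAt_deriv_potential :
    HasDerivAt (fun S : ℝ => -(1 + β * (θ - lam * S) ^ 2) + 2 * β * lam * S * (θ - lam * S))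
      (2 * β * lam * (2 * θ - 3 * lam * S)) S := by
  have h := ((hasDerivAt_id' S).const_mul lam).const_sub θ
  exact ((((h.fun_pow 2).const_mul β).const_add 1).neg.add
    (((hasDerivAt_id' S).const_mul (2 * β * lam)).mul h)).congr_deriv (by norm_num; ring)

end Derivatives

lemma critical_system_iff {β lam S θ P r : ℝ} (hlam : lam ≠ 0) (hθ : 0 < θ) (hr : 0 < r)
    (hr2 : r ^ 2 = 3 * β) :
    (P - S * (1 + β * (θ - lam * S) ^ 2) = 0 ∧
        -(1 + β * (θ - lam * S) ^ 2) + 2 * β * lam * S * (θ - lam * S) = 0 ∧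
        2 * β * lam * (2 * θ - 3 * lam * S) = 0) ↔
      (S = 2 / (lam * r) ∧ θ = 3 / r ∧ P = 8 / (3 * lam * r)) := by
  have hβ : 0 < β := by nlinarith
  constructor
  · rintro ⟨hf, hf', hf''⟩
    have hθS : 2 * θ - 3 * lam * S = 0 := (mul_eq_zero.mp hf'').resolve_left (by positivity)
    generalize hu : θ - lam * S = u at hf hf'
    have hlamS : lam * S = 2 * u := by linarith
    have hθu : θ = 3 * u := by linarith
    have hβu : 3 * β * u ^ 2 = 1 := by linear_combination hf' - 2 * β * u * hlamS
    have hru : r * u = 1 := by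
      have : 0 < r * u := mul_pos hr (by linarith)
      nlinarith
    refine ⟨?_, ?_, ?_⟩ <;> field_simp
    · linear_combination r * hlamS + 2 * hru
    · linear_combination r * hθu + 3 * hru
    · linear_combination 3 * lam * r * hf + 3 * r * (1 + β * u ^ 2) * hlamS +
        6 * (1 + β * u ^ 2) * hru + 2 * hβu
  · rintro ⟨rfl, rfl, rfl⟩
    refine ⟨?_, ?_, ?_⟩ <;> field_simp
    · linear_combination 2 * hr2
    · linear_combination -hr2
    · ring

theorem stmt_9 (β lam : ℝ) (hβ : 0 < β) (hlam : 0 < lam) (S θ P : ℝ) (hθ : 0 < θ) :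
    (P - S * (1 + β * (θ - lam * S) ^ 2) = 0 ∧
       deriv (fun S : ℝ => P - S * (1 + β * (θ - lam * S) ^ 2)) S = 0 ∧
       deriv (deriv (fun S : ℝ => P - S * (1 + β * (θ - lam * S) ^ 2))) S = 0) ↔
      (S = 2 / (lam * Real.sqrt (3 * β)) ∧ θ = Real.sqrt (3 / β) ∧
        P = 8 / (3 * lam * Real.sqrt (3 * β))) := by
  rw [deriv_potential, (hasDerivAt_deriv_potential β lam θ S).deriv,
    sqrt_div_eq_div_sqrt_mul (by norm_num) hβ.le]
  exact critical_system_iff hlam.ne' hθ (sqrt_pos.mpr (by positivity)) (sq_sqrt (by positivity))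
end

section
/- Let β, λ > 0 and f(S, θ, P) = P - S(1 + β(θ - λS)²). If θ² < 3/β, then for every P the function S ↦ f(S, θ, P) is strictly decreasing on ℝ, so the model has a unique equilibrium and no bistability. -/
/-! The map `h S = S (1 + β (θ - λ S)²)` has derivative
`1 + βθ² - 4βλθS + 3βλ²S² = (1 - βθ²/3) + 3β (λS - 2θ/3)²`, which is positive once `βθ² < 3`.
So the map is a strictly increasing continuous function with `h S ≥ S` for `S ≥ 0` and `h S ≤ S`
for `S ≤ 0`, hence a bijection of `ℝ`; `P - h S` is then strictly decreasing with exactly one zero. -/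

open Filter

-- The paper's `f(S, θ, P)` is `P - outflow β λ θ S`.
def outflow (β lam θ S : ℝ) : ℝ := S * (1 + β * (θ - lam * S) ^ 2)

section

variable {β : ℝ} (lam θ : ℝ)

theorem hasDerivAt_outflow (S : ℝ) :
    HasDerivAt (outflow β lam θ)
      (1 + β * θ ^ 2 - 4 * β * lam * θ * S + 3 * β * lam ^ 2 * S ^ 2) S := by
  have h := (hasDerivAt_id' S).fun_mul
    (((((hasDerivAt_id' S).const_mul lam).const_sub θ).fun_pow 2).const_mul β |>.const_add 1)
  exact h.congr_deriv (by norm_num; ring)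

theorem outflow_deriv_pos (hβ : 0 ≤ β) (hθ : β * θ ^ 2 < 3) (S : ℝ) :
    0 < 1 + β * θ ^ 2 - 4 * β * lam * θ * S + 3 * β * lam ^ 2 * S ^ 2 := by
  have hsq : 0 ≤ 3 * β * (lam * S - 2 * θ / 3) ^ 2 := by positivity
  calc (0 : ℝ) < (1 - β * θ ^ 2 / 3) + 3 * β * (lam * S - 2 * θ / 3) ^ 2 := by linarith
    _ = _ := by ring

theorem strictMono_outflow (hβ : 0 ≤ β) (hθ : β * θ ^ 2 < 3) : StrictMono (outflow β lam θ) :=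
  strictMono_of_hasDerivAt_pos (hasDerivAt_outflow lam θ) (outflow_deriv_pos lam θ hβ hθ)

theorem le_outflow (hβ : 0 ≤ β) {S : ℝ} (hS : 0 ≤ S) : S ≤ outflow β lam θ S :=
  le_mul_of_one_le_right hS (le_add_of_nonneg_right (by positivity))

theorem outflow_le (hβ : 0 ≤ β) {S : ℝ} (hS : S ≤ 0) : outflow β lam θ S ≤ S :=
  mul_le_of_one_le_right hS (le_add_of_nonneg_right (by positivity))

theorem surjective_outflow (hβ : 0 ≤ β) : Function.Surjective (outflow β lam θ) := by
  refine Continuous.surjective (by unfold outflow; fun_prop) ?_ ?_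
  · refine tendsto_atTop_mono' _ ?_ tendsto_id
    filter_upwards [eventually_ge_atTop 0] with S hS using le_outflow lam θ hβ hS
  · refine tendsto_atBot_mono' _ ?_ tendsto_id
    filter_upwards [eventually_le_atBot 0] with S hS using outflow_le lam θ hβ hS

end

theorem stmt_19_general (β lam : ℝ) (hβ : 0 < β) (θ : ℝ) (hθ : θ ^ 2 < 3 / β) :
    ∀ P : ℝ,
      StrictAnti (fun S : ℝ => P - S * (1 + β * (θ - lam * S) ^ 2)) ∧
        ∃! S : ℝ, P - S * (1 + β * (θ - lam * S) ^ 2) = 0 := by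
  intro P
  have hβθ : β * θ ^ 2 < 3 := by rwa [lt_div_iff₀ hβ, mul_comm] at hθ
  have hmono := strictMono_outflow lam θ hβ.le hβθ
  refine ⟨fun a b hab => sub_lt_sub_left (hmono hab) P, ?_⟩
  simp only [sub_eq_zero, eq_comm (a := P)]
  exact Function.Bijective.existsUnique ⟨hmono.injective, surjective_outflow lam θ hβ.le⟩ P

theorem stmt_19 (β lam : ℝ) (hβ : 0 < β) (hlam : 0 < lam) (θ : ℝ) (hθ : θ ^ 2 < 3 / β) :
    ∀ P : ℝ,
      StrictAnti (fun S : ℝ => P - S * (1 + β * (θ - lam * S) ^ 2)) ∧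
        ∃! S : ℝ, P - S * (1 + β * (θ - lam * S) ^ 2) = 0 :=
  stmt_19_general β lam hβ θ hθ
end
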